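/- Let X be a finite topological T₀-space, let D(X) be its set of down beat points, and let S_F(X) denote the number of distinct semiflows on X. Then S_F(X) ≥ 2^{|D(X)|}. -/

import Mathlib

/-!
A semiflow on a finite T₀-space moves every point down in the specialization order, so its
time-`t` maps agree for all `t > 0` and it is determined by one continuous idempotent map `r`
with `r x ⤳ x`; conversely every such `r` is the positive-time map of a semiflow. For a set `S`
of down beat points, repeatedly sending each `x ∈ S` to the greatest element of `U_x \ {x}`
gives such an `r` whose moved points are exactly those of `S`, so distinct `S` give distinct
semiflows.
-/

open NNReal

/-- A semiflow on a topological space `X`: a jointly continuous map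
`φ : ℝ≥0 × X → X` with `φ 0 x = x` and `φ s (φ t x) = φ (s + t) x`. -/
def IsSemiflow {X : Type*} [TopologicalSpace X] (φ : ℝ≥0 → X → X) : Prop :=
  Continuous (fun p : ℝ≥0 × X => φ p.1 p.2) ∧
  (∀ x : X, φ 0 x = x) ∧
  ∀ (s t : ℝ≥0) (x : X), φ s (φ t x) = φ (s + t) x

/-- A semiflow is trivial if every time-`t` map is the identity. -/
def IsTrivialSemiflow {X : Type*} [TopologicalSpace X] (φ : ℝ≥0 → X → X) : Prop :=
  ∀ (t : ℝ≥0) (x : X), φ t x = x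

/-- `x` is a down beat point: `U_x \ {x}` has a greatest element in the
specialization order (`y ⤳ x` means `y ≤ x`, i.e. `y ∈ U_x`). -/
def IsDownBeatPoint {X : Type*} [TopologicalSpace X] (x : X) : Prop :=
  ∃ m : X, (m ⤳ x ∧ m ≠ x) ∧ ∀ y : X, y ⤳ x → y ≠ x → y ⤳ m

/-- `x` is an up beat point: `F_x \ {x}` has a least element in the
specialization order. -/
def IsUpBeatPoint {X : Type*} [TopologicalSpace X] (x : X) : Prop :=
  ∃ m : X, (x ⤳ m ∧ m ≠ x) ∧ ∀ y : X, x ⤳ y → y ≠ x → m ⤳ y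

open Filter Topology Set

theorem NNReal.addSubmonoid_eq_top_of_mem_nhds_zero (M : AddSubmonoid ℝ≥0)
    (hM : (M : Set ℝ≥0) ∈ 𝓝 0) : M = ⊤ := by
  refine (AddSubmonoid.eq_top_iff' M).2 fun t => ?_
  obtain ⟨n, hn, hpos⟩ :=
    ((tendsto_const_div_atTop_nhds_zero_nat t).eventually hM).and (eventually_gt_atTop 0) |>.exists
  have : t = n • (t / n) := by
    rw [nsmul_eq_mul, mul_div_cancel₀ _ (Nat.cast_ne_zero.2 hpos.ne')]
  exact this ▸ M.nsmul_mem hn n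

theorem exists_forall_Ioc_eq_of_monotoneOn {ι α : Type*} [Preorder ι] [PartialOrder α] {a : ι}
    {f : ι → α} (hf : MonotoneOn f (Ioi a)) (hfin : (f '' Ioi a).Finite)
    (hne : (Ioi a).Nonempty) : ∃ s, a < s ∧ ∀ u, a < u → u ≤ s → f u = f s := by
  obtain ⟨s, hs, hmin⟩ := hfin.exists_minimalFor' f (Ioi a) hne
  exact ⟨s, hs, fun u hu hus => le_antisymm (hf hu hs hus) (hmin hu (hf hu hs hus))⟩

namespace IsSemiflow

variable {X : Type*} [TopologicalSpace X] {φ : ℝ≥0 → X → X}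

theorem continuous_apply (hφ : IsSemiflow φ) (t : ℝ≥0) : Continuous (φ t) :=
  hφ.1.comp (continuous_const.prodMk continuous_id)

theorem continuous_apply_left (hφ : IsSemiflow φ) (x : X) : Continuous (φ · x) :=
  hφ.1.comp (continuous_id.prodMk continuous_const)

/-- The times at which `φ` sends `x` into `U_x` form an open additive submonoid of `ℝ≥0`. -/
theorem apply_specializes [AlexandrovDiscrete X] (hφ : IsSemiflow φ) (t : ℝ≥0) (x : X) :
    φ t x ⤳ x := by
  let M : AddSubmonoid ℝ≥0 :=
    { carrier := (φ · x) ⁻¹' nhdsKer {x}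
      zero_mem' := mem_nhdsKer_singleton.2 (by simp only [hφ.2.1, specializes_refl])
      add_mem' := fun {s t} hs ht => by
        simp only [mem_preimage, mem_nhdsKer_singleton, ← hφ.2.2] at hs ht ⊢
        exact (ht.map (hφ.continuous_apply s)).trans hs }
  have hopen : IsOpen (M : Set ℝ≥0) := isOpen_nhdsKer.preimage (hφ.continuous_apply_left x)
  have hM := NNReal.addSubmonoid_eq_top_of_mem_nhds_zero M (hopen.mem_nhds M.zero_mem)
  exact mem_nhdsKer_singleton.1 (hM ▸ AddSubmonoid.mem_top t : t ∈ M)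

theorem apply_specializes_apply_of_le [AlexandrovDiscrete X] (hφ : IsSemiflow φ) {s t : ℝ≥0}
    (hst : s ≤ t) (x : X) : φ t x ⤳ φ s x := by
  rw [← add_tsub_cancel_of_le hst, ← hφ.2.2]
  exact (hφ.apply_specializes _ x).map (hφ.continuous_apply s)

theorem exists_pos_forall_Ioc_eq [Finite X] [T0Space X] (hφ : IsSemiflow φ) :
    ∃ s, 0 < s ∧ ∀ u, 0 < u → u ≤ s → φ u = φ s := by
  have : Finite (Specialization X) := ‹Finite X›
  let f : ℝ≥0 → X → Specialization X := fun t x => Specialization.toEquiv (φ t x)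
  have hf : MonotoneOn f (Ioi 0) := fun u _ t _ hut x => hφ.apply_specializes_apply_of_le hut x
  obtain ⟨s, hs, hconst⟩ :=
    exists_forall_Ioc_eq_of_monotoneOn hf (toFinite (f '' Ioi 0)) nonempty_Ioi
  exact ⟨s, hs, fun u hu hus => funext fun x => congrFun (hconst u hu hus) x⟩

/-- `φ` is constant on some `(0, s]`; its value there is idempotent, so the times at which `φ`
takes that value form, together with `0`, an additive submonoid that is a neighbourhood of `0`. -/
theorem apply_eq_apply_one [Finite X] [T0Space X] (hφ : IsSemiflow φ) {t : ℝ≥0} (ht : 0 < t) :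
    φ t = φ 1 := by
  obtain ⟨s, hs, hconst⟩ := hφ.exists_pos_forall_Ioc_eq
  have hidem : ∀ x, φ s (φ s x) = φ s x := fun x =>
    calc φ s (φ s x) = φ (s / 2) (φ (s / 2) x) := by
          rw [hconst (s / 2) (half_pos hs) (NNReal.half_le_self s)]
      _ = φ s x := by rw [hφ.2.2, add_halves]
  let M : AddSubmonoid ℝ≥0 :=
    { carrier := {t | t = 0 ∨ φ t = φ s}
      zero_mem' := Or.inl rfl
      add_mem' := by
        rintro a b (rfl | ha) (rfl | hb)
        · exact Or.inl (zero_add 0)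
        · exact (zero_add b).symm ▸ Or.inr hb
        · exact (add_zero a).symm ▸ Or.inr ha
        · exact Or.inr (funext fun x => by rw [← hφ.2.2, ha, hb, hidem]) }
  have hM : M = ⊤ := NNReal.addSubmonoid_eq_top_of_mem_nhds_zero M <|
    mem_of_superset (Iic_mem_nhds hs) fun u hus => (eq_zero_or_pos u).imp_right (hconst u · hus)
  have hval : ∀ t, 0 < t → φ t = φ s := fun t ht =>
    ((hM ▸ AddSubmonoid.mem_top t : t ∈ M)).resolve_left ht.ne'
  rw [hval t ht, hval 1 one_pos]

end IsSemiflow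

instance finite_semiflow {X : Type*} [TopologicalSpace X] [Finite X] [T0Space X] :
    Finite {φ : ℝ≥0 → X → X // IsSemiflow φ} :=
  Finite.of_injective (fun φ => φ.1 1) fun φ ψ h => Subtype.ext <| funext fun t => by
    rcases eq_zero_or_pos t with rfl | ht
    · exact funext fun x => by rw [φ.2.2.1, ψ.2.2.1]
    · rw [φ.2.apply_eq_apply_one ht, ψ.2.apply_eq_apply_one ht]
      exact h

section Construction

variable {X : Type*}

noncomputable def retractionSemiflow (r : X → X) : ℝ≥0 → X → X :=
  fun t x => if t = 0 then x else r x

theorem retractionSemiflow_one (r : X → X) : retractionSemiflow r 1 = r :=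
  funext fun _ => if_neg one_ne_zero

variable [TopologicalSpace X]

theorem continuous_of_forall_specializes [AlexandrovDiscrete X] {Y : Type*} [TopologicalSpace Y]
    {f : X → Y} (hf : ∀ x y, x ⤳ y → f x ⤳ f y) : Continuous f :=
  continuous_def.2 fun _U hU =>
    isOpen_iff_forall_specializes.2 fun x y hxy hy => (hf x y hxy).mem_open hU hy

theorem isSemiflow_retractionSemiflow {r : X → X} (hr : Continuous r)
    (hidem : ∀ x, r (r x) = r x) (hsp : ∀ x, r x ⤳ x) : IsSemiflow (retractionSemiflow r) := by
  refine ⟨continuous_def.2 fun U hU => ?_, fun x => if_pos rfl, fun s t x => ?_⟩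
  · have hpre : (fun p : ℝ≥0 × X => retractionSemiflow r p.1 p.2) ⁻¹' U =
        univ ×ˢ U ∪ {0}ᶜ ×ˢ (r ⁻¹' U) := by
      ext ⟨t, x⟩
      by_cases ht : t = 0
      · simp [retractionSemiflow, ht]
      · simpa [retractionSemiflow, ht] using fun hx => (hsp x).mem_open hU hx
    rw [hpre]
    exact (isOpen_univ.prod hU).union (isOpen_compl_singleton.prod (hU.preimage hr))
  · by_cases hs : s = 0 <;> by_cases ht : t = 0 <;> simp [retractionSemiflow, hs, ht, hidem]

end Construction

section Iterate

variable {X : Type*} [TopologicalSpace X] {f : X → X}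

theorem iterate_specializes_iterate_of_le (hf : ∀ x, f x ⤳ x) {m n : ℕ} (hmn : m ≤ n) (x : X) :
    f^[n] x ⤳ f^[m] x := by
  induction n, hmn using Nat.le_induction with
  | base => exact specializes_rfl
  | succ n _ ih => exact (Function.iterate_succ_apply' f n x ▸ hf _).trans ih

theorem iterate_eq_self_iff [T0Space X] (hf : ∀ x, f x ⤳ x) {n : ℕ} (hn : n ≠ 0) {x : X} :
    f^[n] x = x ↔ f x = x := by
  refine ⟨fun h => ?_, fun h => Function.iterate_fixed h n⟩
  have hx : x ⤳ f x := by
    simpa only [h, Function.iterate_one] using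
      iterate_specializes_iterate_of_le hf (Nat.one_le_iff_ne_zero.2 hn) x
  exact ((hf x).antisymm hx).eq

/-- By pigeonhole two of `x, f x, …, f^[card X] x` coincide, and since the sequence descends in
the specialization order it is constant from the first of them on. -/
theorem iterate_card_isFixedPt [Finite X] [T0Space X] (hf : ∀ x, f x ⤳ x) (x : X) :
    Function.IsFixedPt f (f^[Nat.card X] x) := by
  have := Fintype.ofFinite X
  obtain ⟨i, j, hne, heq⟩ := Fintype.exists_ne_map_eq_of_card_lt
    (fun i : Fin (Nat.card X + 1) => f^[i] x) (by simp [Nat.card_eq_fintype_card])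
  wlog hij : i < j generalizing i j
  · exact this j i hne.symm heq.symm (lt_of_le_of_ne (not_lt.1 hij) hne.symm)
  have hfix : Function.IsFixedPt f (f^[i] x) := by
    have hle : f^[i] x ⤳ f^[i + 1] x :=
      heq ▸ iterate_specializes_iterate_of_le hf (Nat.succ_le_of_lt hij) x
    rw [Function.IsFixedPt, ← Function.iterate_succ_apply' f]
    exact (hle.antisymm (iterate_specializes_iterate_of_le hf (Nat.le_succ i) x)).eq.symm
  have hi : (i : ℕ) ≤ Nat.card X := Nat.lt_succ_iff.1 i.2
  rw [← Nat.sub_add_cancel hi, Function.iterate_add_apply, Function.iterate_fixed hfix]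
  exact hfix

end Iterate

section Collapse

variable {X : Type*} [TopologicalSpace X] (S : Set X)

open Classical in
noncomputable def collapseStep (x : X) : X :=
  if h : x ∈ S ∧ IsDownBeatPoint x then h.2.choose else x

theorem collapseStep_specializes (x : X) : collapseStep S x ⤳ x := by
  unfold collapseStep
  split_ifs with h
  exacts [h.2.choose_spec.1.1, specializes_rfl]

theorem collapseStep_eq_self_iff {x : X} :
    collapseStep S x = x ↔ ¬(x ∈ S ∧ IsDownBeatPoint x) := by
  unfold collapseStep
  split_ifs with h
  · exact iff_of_false h.2.choose_spec.1.2 (not_not.2 h)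
  · exact iff_of_true rfl h

theorem collapseStep_specializes_collapseStep {x y : X} (hyx : y ⤳ x) :
    collapseStep S y ⤳ collapseStep S x := by
  by_cases hx : x ∈ S ∧ IsDownBeatPoint x
  · rcases eq_or_ne y x with rfl | hne
    · exact specializes_rfl
    · have hcx : collapseStep S x = hx.2.choose := dif_pos hx
      rw [hcx]
      exact (collapseStep_specializes S y).trans (hx.2.choose_spec.2 y hyx hne)
  · rw [(collapseStep_eq_self_iff S).2 hx]
    exact (collapseStep_specializes S y).trans hyx

noncomputable def collapse : X → X :=
  (collapseStep S)^[Nat.card X]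

theorem collapse_specializes (x : X) : collapse S x ⤳ x :=
  iterate_specializes_iterate_of_le (collapseStep_specializes S) (Nat.zero_le _) x

theorem collapse_specializes_collapse {x y : X} (hyx : y ⤳ x) : collapse S y ⤳ collapse S x := by
  unfold collapse
  induction Nat.card X with
  | zero => exact hyx
  | succ n ih =>
    simp only [Function.iterate_succ_apply']
    exact collapseStep_specializes_collapseStep S ih

variable [Finite X]

theorem continuous_collapse : Continuous (collapse S) :=
  continuous_of_forall_specializes fun _ _ => collapse_specializes_collapse S

variable [T0Space X]

theorem collapse_collapse (x : X) : collapse S (collapse S x) = collapse S x :=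
  Function.iterate_fixed (iterate_card_isFixedPt (collapseStep_specializes S) x) _

theorem collapse_eq_self_iff {x : X} : collapse S x = x ↔ ¬(x ∈ S ∧ IsDownBeatPoint x) := by
  have : Nonempty X := ⟨x⟩
  rw [collapse, iterate_eq_self_iff (collapseStep_specializes S) Nat.card_pos.ne',
    collapseStep_eq_self_iff]

theorem isSemiflow_retractionSemiflow_collapse : IsSemiflow (retractionSemiflow (collapse S)) :=
  isSemiflow_retractionSemiflow (continuous_collapse S) (collapse_collapse S)
    (collapse_specializes S)

variable (X) in
theorem injOn_collapse_downBeatPoints : InjOn (collapse (X := X)) (𝒫 {x | IsDownBeatPoint x}) :=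
  fun S hS T hT hST => ext fun x => by
    have hmem : ∀ {U : Set X}, U ⊆ {x | IsDownBeatPoint x} → (x ∈ U ↔ collapse U x ≠ x) :=
      fun hU => by
        rw [Ne, collapse_eq_self_iff, not_not]
        exact iff_self_and.2 (@hU x)
    rw [hmem hS, hmem hT, hST]

end Collapse

/-- The number of semiflows on a finite `T₀`-space is at least
`2 ^ |D(X)|`, where `D(X)` is the set of down beat points. -/
theorem card_semiflows_ge_pow_downBeatPoints {X : Type*} [TopologicalSpace X] [Finite X]
    [T0Space X] :
    2 ^ Set.ncard {x : X | IsDownBeatPoint x} ≤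
      Nat.card {φ : ℝ≥0 → X → X // IsSemiflow φ} := by
  let semiflowOf (S : 𝒫 {x : X | IsDownBeatPoint x}) : {φ : ℝ≥0 → X → X // IsSemiflow φ} :=
    ⟨retractionSemiflow (collapse S.1), isSemiflow_retractionSemiflow_collapse S.1⟩
  have hinj : Function.Injective semiflowOf := fun S T hST =>
    Subtype.ext <| injOn_collapse_downBeatPoints X S.2 T.2 <| by
      rw [← retractionSemiflow_one (collapse S.1), ← retractionSemiflow_one (collapse T.1)]
      exact congrArg (fun φ => φ.1 1) hST
  calc 2 ^ Set.ncard {x : X | IsDownBeatPoint x}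
      = Nat.card (𝒫 {x : X | IsDownBeatPoint x}) := by rw [Nat.card_coe_set_eq, ncard_powerset]
    _ ≤ _ := Nat.card_le_card_of_injective semiflowOf hinj
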